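/- For real h = (h₁,h₂) ∈ 𝔥 ⊗ ℝ² and k ∈ 𝔥_ℂ ⊗ ℂ², the Weyl operator U(h₁,h₂) lies in Dom D_k and D_k U(h₁,h₂) = i(⟨k̄₁, h₁⟩ + ⟨k̄₂, h₂⟩) U(h₁,h₂). -/
import Mathlib


open scoped ComplexInnerProductSpace

/-- The vector `Q(k)ℰ(f) = (a(k̄)+a⁺(k))ℰ(f) = ⟪k̄,f⟫ ℰ(f) + a⁺(k)ℰ(f)`. -/
noncomputable def Qvec {H K : Type*} [NormedAddCommGroup H] [InnerProductSpace ℂ H]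
    [NormedAddCommGroup K] [InnerProductSpace ℂ K]
    (E : H → K) (ap : H → K → K) (c : H → H) (k f : H) : K :=
  ⟪c k, f⟫ • E f + ap k (E f)

/-- The vector `P(k)ℰ(f) = i(a(k̄)−a⁺(k))ℰ(f) = i(⟪k̄,f⟫ ℰ(f) − a⁺(k)ℰ(f))`. -/
noncomputable def Pvec {H K : Type*} [NormedAddCommGroup H] [InnerProductSpace ℂ H]
    [NormedAddCommGroup K] [InnerProductSpace ℂ K]
    (E : H → K) (ap : H → K → K) (c : H → H) (k f : H) : K :=
  Complex.I • (⟪c k, f⟫ • E f - ap k (E f))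

/-- `B ∈ Dom D_k` with `D_k B = M`, expressed weakly between exponential
vectors. -/
def DomRel {H K : Type*} [NormedAddCommGroup H] [InnerProductSpace ℂ H]
    [NormedAddCommGroup K] [InnerProductSpace ℂ K]
    (E : H → K) (ap : H → K → K) (c : H → H) (k₁ k₂ : H)
    (B M : K →L[ℂ] K) : Prop :=
  ∀ f g : H,
    ⟪E f, M (E g)⟫ =
      Complex.I / 2 *
        (⟪Qvec E ap c (c k₁) f - Pvec E ap c (c k₂) f, B (E g)⟫
          - ⟪E f, B (Qvec E ap c k₁ g - Pvec E ap c k₂ g)⟫)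

/-- **Derivation of a Weyl operator.**
For real `h = (h₁,h₂) ∈ 𝔥 ⊗ ℝ²` and `k = (k₁,k₂) ∈ 𝔥_ℂ ⊗ ℂ²`, the Weyl
operator `U(h₁,h₂)` (the bounded operator acting on exponential vectors by
`U(h₁,h₂)ℰ(f) = exp(−⟨f̄,h₁+ih₂⟩ − (⟨h₁,h₁⟩+⟨h₂,h₂⟩)/2) ℰ(f+h₁+ih₂)`)
belongs to `Dom D_k` and `D_k U(h₁,h₂) = i(⟨k̄₁,h₁⟩ + ⟨k̄₂,h₂⟩) U(h₁,h₂)`. -/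
theorem derivation_of_weyl_operator
    {H K : Type*} [NormedAddCommGroup H] [InnerProductSpace ℂ H]
    [NormedAddCommGroup K] [InnerProductSpace ℂ K]
    (E : H → K)
    (hE : ∀ f g : H, ⟪E f, E g⟫ = Complex.exp ⟪f, g⟫)
    (htotal : (Submodule.span ℂ (Set.range E)).topologicalClosure = ⊤)
    (ap : H → K → K)
    (hap : ∀ (h : H) (f g : H), ⟪E f, ap h (E g)⟫ = ⟪f, h⟫ * Complex.exp ⟪f, g⟫)
    (c : H → H)
    (hc_add : ∀ x y : H, c (x + y) = c x + c y)
    (hc_smul : ∀ (z : ℂ) (x : H), c (z • x) = (starRingEnd ℂ z) • c x)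
    (hc_invol : ∀ x : H, c (c x) = x)
    (hc_inner : ∀ x y : H, ⟪c x, c y⟫ = ⟪y, x⟫)
    (h₁ h₂ : H) (hh₁ : c h₁ = h₁) (hh₂ : c h₂ = h₂)
    (U : K →L[ℂ] K)
    (hU : ∀ f : H, U (E f) =
      Complex.exp (-⟪h₁ + Complex.I • h₂, f⟫ - (⟪h₁, h₁⟫ + ⟪h₂, h₂⟫) / 2) •
        E (f + h₁ + Complex.I • h₂))
    (k₁ k₂ : H) :
    DomRel E ap c k₁ k₂ U
      ((Complex.I * (⟪c k₁, h₁⟫ + ⟪c k₂, h₂⟫)) • U) := by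
  intro f g
  set S : ℂ := (⟪h₁, h₁⟫ + ⟪h₂, h₂⟫) / 2 with hS
  set w : H := h₁ + Complex.I • h₂ with hw
  have hap' : ∀ (h x y : H), ⟪ap h (E x), E y⟫ = ⟪h, y⟫ * Complex.exp ⟪x, y⟫ := by
    intro h x y
    rw [← inner_conj_symm, hap, map_mul, inner_conj_symm, ← Complex.exp_conj, inner_conj_symm]
  have hUE : ∀ x : H, U (E x) = Complex.exp (-⟪w, x⟫ - S) • E (x + w) := by
    intro x
    rw [hU x, add_assoc, ← hw]
  have hdense : Dense ((Submodule.span ℂ (Set.range E) : Submodule ℂ K) : Set K) := by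
    rw [Submodule.dense_iff_topologicalClosure_eq_top]
    exact htotal
  have key : ∀ v : K, ⟪E f, U v⟫ = Complex.exp (⟪f, w⟫ - S) * ⟪E (f - w), v⟫ := by
    have heq : (innerSL ℂ (E f)).comp U
        = Complex.exp (⟪f, w⟫ - S) • innerSL ℂ (E (f - w)) := by
      refine ContinuousLinearMap.ext_on hdense ?_
      rintro v ⟨x, rfl⟩
      simp only [ContinuousLinearMap.comp_apply, ContinuousLinearMap.smul_apply,
        innerSL_apply_apply, smul_eq_mul]
      rw [hUE x, inner_smul_right, hE, hE, ← Complex.exp_add, ← Complex.exp_add,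
        inner_add_right, inner_sub_left]
      congr 1
      ring
    intro v
    have h2 := DFunLike.congr_fun heq v
    simpa only [ContinuousLinearMap.comp_apply, ContinuousLinearMap.smul_apply,
      innerSL_apply_apply, smul_eq_mul] using h2
  set Z : ℂ := Complex.exp (⟪f, g⟫ + ⟪f, w⟫ - ⟪w, g⟫ - S) with hZ
  have hZ1 : Complex.exp (-⟪w, g⟫ - S) * Complex.exp ⟪f, g + w⟫ = Z := by
    rw [hZ, ← Complex.exp_add, inner_add_right]
    congr 1
    ring
  have hZ2 : Complex.exp (⟪f, w⟫ - S) * Complex.exp ⟪f - w, g⟫ = Z := by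
    rw [hZ, ← Complex.exp_add, inner_sub_left]
    congr 1
    ring
  have hL : ⟪E f, U (E g)⟫ = Z := by
    rw [key, hE]
    exact hZ2
  have hA : ⟪Qvec E ap c (c k₁) f - Pvec E ap c (c k₂) f, U (E g)⟫
      = Z * (⟪f, k₁⟫ + ⟪c k₁, g + w⟫ + Complex.I * (⟪f, k₂⟫ - ⟪c k₂, g + w⟫)) := by
    rw [hUE g]
    simp only [Qvec, Pvec, hc_invol, inner_smul_right, inner_sub_left, inner_add_left,
      inner_smul_left, hE, hap', Complex.conj_I, inner_conj_symm]
    linear_combination (⟪f, k₁⟫ + ⟪c k₁, g + w⟫ + Complex.I * (⟪f, k₂⟫ - ⟪c k₂, g + w⟫)) * hZ1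
  have hB : ⟪E f, U (Qvec E ap c k₁ g - Pvec E ap c k₂ g)⟫
      = Z * (⟪c k₁, g⟫ + ⟪f - w, k₁⟫ - Complex.I * (⟪c k₂, g⟫ - ⟪f - w, k₂⟫)) := by
    rw [key]
    simp only [Qvec, Pvec, inner_sub_right, inner_add_right, inner_smul_right, hE, hap]
    linear_combination (⟪c k₁, g⟫ + ⟪f - w, k₁⟫ - Complex.I * (⟪c k₂, g⟫ - ⟪f - w, k₂⟫)) * hZ2
  have q1 : ⟪c k₁, h₁⟫ = ⟪h₁, k₁⟫ := by
    have := hc_inner k₁ h₁; rwa [hh₁] at this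
  have q2 : ⟪c k₁, h₂⟫ = ⟪h₂, k₁⟫ := by
    have := hc_inner k₁ h₂; rwa [hh₂] at this
  have q3 : ⟪c k₂, h₁⟫ = ⟪h₁, k₂⟫ := by
    have := hc_inner k₂ h₁; rwa [hh₁] at this
  have q4 : ⟪c k₂, h₂⟫ = ⟪h₂, k₂⟫ := by
    have := hc_inner k₂ h₂; rwa [hh₂] at this
  rw [ContinuousLinearMap.smul_apply, inner_smul_right, hL, hA, hB]
  simp only [hw, inner_add_left, inner_add_right, inner_sub_left, inner_smul_left,
    inner_smul_right, Complex.conj_I, q1, q2, q3, q4]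
  linear_combination (Complex.I * Z * ⟪h₂, k₂⟫) * Complex.I_mul_I
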